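/- For the site random-cluster measure ψ on subsets Y of the vertex set of a finite graph of maximal degree Δ, with weight ∝ 2^{k(Y)} p^{#Y} (1−p)^{#(V∖Y)}, the single-site conditional probability that i ∈ Y given Y∖{i} equals p / (p + (1−p)·2^{κ(i,Y)−1}), where κ(i,Y) is the number of clusters of Y∖{i} meeting the neighborhood of i. Consequently ψ is stochastically dominated by Bernoulli site percolation with parameter p* = p/(p+(1−p)/2) and stochastically dominates Bernoulli site percolation with parameter p_* = p/(p+(1−p)2^{Δ−1}). -/

import Mathlib

/-!
Adding a vertex `i` to `A = Y ∖ {i}` fuses `i` with the `κ(i, Y)` clusters of `A` adjacent to it,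
so `k(A ∪ {i}) = k(A) + 1 - κ(i, Y)`, and the ratio of the two weights gives the conditional
probability. Since `0 ≤ κ ≤ Δ`, these conditional probabilities lie between `p_*` and `p*`.
Holley's criterion against a product measure then follows by induction on the vertex set,
conditioning on one vertex at a time.
-/

open Finset

namespace SiteRC

variable {V : Type*} [Fintype V] [DecidableEq V]

/-- The number of connected components of the subgraph of `G` induced on `Y`. -/
noncomputable def numClusters (G : SimpleGraph V) (Y : Finset V) : ℕ :=
  Nat.card (SimpleGraph.induce (↑Y : Set V) G).ConnectedComponent

/-- The site random-cluster weight `2^{k(Y)} p^{#Y} (1-p)^{#(V∖Y)}`. -/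
noncomputable def siteWeight (G : SimpleGraph V) (p : ℝ) (Y : Finset V) : ℝ :=
  2 ^ numClusters G Y * p ^ Y.card * (1 - p) ^ (Fintype.card V - Y.card)

/-- `κ(i, Y)`: the number of clusters of `Y ∖ {i}` meeting the neighbourhood of `i`. -/
noncomputable def kappa (G : SimpleGraph V) (i : V) (Y : Finset V) : ℕ :=
  Nat.card {C : (SimpleGraph.induce (↑(Y.erase i) : Set V) G).ConnectedComponent //
    ∃ y : (↑(Y.erase i) : Set V), G.Adj i ↑y ∧
      (SimpleGraph.induce (↑(Y.erase i) : Set V) G).connectedComponentMk y = C}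

/-- The Bernoulli site percolation weight with parameter `q`. -/
def bernoulliSiteWeight (q : ℝ) (Y : Finset V) : ℝ :=
  q ^ Y.card * (1 - q) ^ (Fintype.card V - Y.card)

end SiteRC

namespace SiteRC

open SimpleGraph

variable {V : Type*}

lemma _root_.Nat.card_eq_card_subtype_add_card_subtype_not {α : Type*} [Finite α]
    (P : α → Prop) : Nat.card α = Nat.card {a // P a} + Nat.card {a // ¬P a} := by
  classical
  exact (Nat.card_congr (Equiv.sumCompl P)).symm.trans Nat.card_sum

section Clusters

variable [DecidableEq V] (G : SimpleGraph V) {i : V} {Y : Finset V}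

def IsAdjacentCluster (G : SimpleGraph V) (i : V) (Y : Finset V)
    (C : (G.induce (↑(Y.erase i) : Set V)).ConnectedComponent) : Prop :=
  ∃ y : (↑(Y.erase i) : Set V), G.Adj i ↑y ∧
    (G.induce (↑(Y.erase i) : Set V)).connectedComponentMk y = C

lemma kappa_eq_card_isAdjacentCluster :
    kappa G i Y = Nat.card {C // IsAdjacentCluster G i Y C} := rfl

def inclErase (G : SimpleGraph V) (i : V) (Y : Finset V) :
    G.induce (↑(Y.erase i) : Set V) →g G.induce (↑Y : Set V) :=
  (G.induceHomOfLE (coe_subset.2 (erase_subset i Y))).toHom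

lemma reachable_erase_of_walk_avoiding {x y : (↑(Y.erase i) : Set V)}
    (W : (G.induce (↑Y : Set V)).Walk (inclErase G i Y x) (inclErase G i Y y))
    (hW : ∀ z ∈ W.support, (z : V) ≠ i) :
    (G.induce (↑(Y.erase i) : Set V)).Reachable x y := by
  have hsupp :
      ∀ z ∈ (W.map (Embedding.induce _).toHom).support, z ∈ (↑(Y.erase i) : Set V) := by
    simp only [Walk.support_map, List.mem_map]
    rintro _ ⟨z, hz, rfl⟩
    exact mem_erase.2 ⟨hW z hz, z.2⟩
  exact ⟨(W.map _).induce _ hsupp⟩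

lemma exists_adjacent_reachable_of_walk {u v : (↑Y : Set V)}
    (W : (G.induce (↑Y : Set V)).Walk u v) (hv : (v : V) = i) (hu : (u : V) ≠ i) :
    ∃ y : (↑(Y.erase i) : Set V), G.Adj i ↑y ∧
      (G.induce (↑(Y.erase i) : Set V)).Reachable y ⟨u, mem_erase.2 ⟨hu, u.2⟩⟩ := by
  induction W with
  | nil => exact absurd hv hu
  | @cons u b v hub W ih =>
    by_cases hb : (b : V) = i
    · exact ⟨⟨u, mem_erase.2 ⟨hu, u.2⟩⟩, hb ▸ hub.symm, Reachable.refl _⟩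
    · obtain ⟨y, hiy, hyb⟩ := ih hv hb
      have hub' : (G.induce (↑(Y.erase i) : Set V)).Adj ⟨b, mem_erase.2 ⟨hb, b.2⟩⟩
          ⟨u, mem_erase.2 ⟨hu, u.2⟩⟩ := hub.symm
      exact ⟨y, hiy, hyb.trans hub'.reachable⟩

lemma map_eq_connectedComponentMk_iff (hi : i ∈ Y)
    (C : (G.induce (↑(Y.erase i) : Set V)).ConnectedComponent) :
    C.map (inclErase G i Y) = (G.induce (↑Y : Set V)).connectedComponentMk ⟨i, hi⟩ ↔
      IsAdjacentCluster G i Y C := by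
  induction C using ConnectedComponent.ind with | h x => ?_
  rw [ConnectedComponent.map_mk, ConnectedComponent.eq]
  constructor
  · rintro ⟨W⟩
    obtain ⟨y, hiy, hyx⟩ := exists_adjacent_reachable_of_walk G W rfl (mem_erase.1 x.2).1
    exact ⟨y, hiy, ConnectedComponent.sound hyx⟩
  · rintro ⟨y, hiy, hyx⟩
    exact ((ConnectedComponent.exact hyx).map (inclErase G i Y)).symm.trans
      (Adj.reachable hiy.symm)

lemma reachable_erase_of_reachable (hi : i ∈ Y) {x x' : (↑(Y.erase i) : Set V)}
    (hx : ¬(G.induce (↑Y : Set V)).Reachable (inclErase G i Y x) ⟨i, hi⟩)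
    (h : (G.induce (↑Y : Set V)).Reachable (inclErase G i Y x) (inclErase G i Y x')) :
    (G.induce (↑(Y.erase i) : Set V)).Reachable x x' := by
  obtain ⟨W⟩ := h
  refine reachable_erase_of_walk_avoiding G W fun z hz hzi => hx ?_
  exact ⟨(W.takeUntil z hz).copy rfl (Subtype.ext hzi)⟩

theorem numClusters_add_kappa (hi : i ∈ Y) :
    numClusters G Y + kappa G i Y = numClusters G (Y.erase i) + 1 := by
  set Ci := (G.induce (↑Y : Set V)).connectedComponentMk ⟨i, hi⟩
  let φ : {C // ¬IsAdjacentCluster G i Y C} → {D // D ≠ Ci} :=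
    fun C => ⟨C.1.map (inclErase G i Y), (map_eq_connectedComponentMk_iff G hi C.1).not.2 C.2⟩
  have hφ : Function.Bijective φ := by
    constructor
    · rintro ⟨C, hC⟩ ⟨C', _⟩ hCC'
      obtain ⟨x, rfl⟩ := C.exists_rep
      obtain ⟨x', rfl⟩ := C'.exists_rep
      refine Subtype.ext (ConnectedComponent.sound (reachable_erase_of_reachable G hi
        (fun hxi => hC ?_) (ConnectedComponent.exact (congrArg Subtype.val hCC'))))
      exact (map_eq_connectedComponentMk_iff G hi _).1 (ConnectedComponent.sound hxi)
    · rintro ⟨D, hD⟩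
      induction D using ConnectedComponent.ind with | h z => ?_
      have hz : (z : V) ≠ i := fun h => hD (congrArg _ (Subtype.ext h))
      have hφz : ((G.induce (↑(Y.erase i) : Set V)).connectedComponentMk
          ⟨z, mem_erase.2 ⟨hz, z.2⟩⟩).map (inclErase G i Y) =
            (G.induce (↑Y : Set V)).connectedComponentMk z := rfl
      exact ⟨⟨_, fun h => hD (hφz ▸ (map_eq_connectedComponentMk_iff G hi _).2 h)⟩,
        Subtype.ext hφz⟩
  rw [numClusters, numClusters, kappa_eq_card_isAdjacentCluster,
    Nat.card_eq_card_subtype_add_card_subtype_not (· = Ci),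
    Nat.card_eq_card_subtype_add_card_subtype_not (IsAdjacentCluster G i Y),
    ← Nat.card_congr (Equiv.ofBijective φ hφ), Nat.card_unique]
  omega

lemma kappa_le_degree [Fintype (G.neighborSet i)] : kappa G i Y ≤ G.degree i := by
  rw [← card_neighborSet_eq_degree, ← Nat.card_eq_fintype_card, kappa_eq_card_isAdjacentCluster]
  choose y hiy hyC using fun C : {C // IsAdjacentCluster G i Y C} => C.2
  refine Nat.card_le_card_of_injective (fun C => ⟨y C, hiy C⟩) fun C C' h => Subtype.ext ?_
  rw [← hyC C, ← hyC C', Subtype.val_injective (Subtype.mk.inj h)]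

lemma kappa_insert_erase : kappa G i (insert i (Y.erase i)) = kappa G i Y := by
  unfold kappa
  rw [erase_insert_eq_erase, erase_idem]

end Clusters

def bernoulliExpect (q : ℝ) (S : Finset V) (f : Finset V → ℝ) : ℝ :=
  ∑ A ∈ S.powerset, q ^ #A * (1 - q) ^ (#S - #A) * f A

lemma bernoulliExpect_insert [DecidableEq V] {i : V} {S : Finset V} (hi : i ∉ S) (q : ℝ)
    (f : Finset V → ℝ) :
    bernoulliExpect q (insert i S) f =
      (1 - q) * bernoulliExpect q S f + q * bernoulliExpect q S (fun A => f (insert i A)) := by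
  rw [bernoulliExpect, sum_powerset_insert hi, bernoulliExpect, bernoulliExpect, mul_sum, mul_sum,
    card_insert_of_notMem hi]
  congr 1 <;> refine sum_congr rfl fun A hA => ?_
  · rw [Nat.sub_add_comm (card_le_card (mem_powerset.1 hA)), pow_succ]
    ring
  · rw [card_insert_of_notMem fun h => hi (mem_powerset.1 hA h), Nat.add_sub_add_right]
    ring

lemma bernoulliExpect_mono {q : ℝ} (hq0 : 0 ≤ q) (hq1 : q ≤ 1) (S : Finset V)
    {f g : Finset V → ℝ} (hfg : ∀ A, f A ≤ g A) :
    bernoulliExpect q S f ≤ bernoulliExpect q S g :=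
  sum_le_sum fun A _ => mul_le_mul_of_nonneg_left (hfg A) (by have := sub_nonneg.2 hq1; positivity)

theorem sum_mul_le_sum_mul_bernoulliExpect [DecidableEq V] {q : ℝ} (hq0 : 0 ≤ q) (hq1 : q ≤ 1)
    (S : Finset V) {f : Finset V → ℝ} (hf : Monotone f) {w : Finset V → ℝ}
    (hw : ∀ i ∈ S, ∀ A ⊆ S, i ∉ A → (1 - q) * w (insert i A) ≤ q * w A) :
    ∑ A ∈ S.powerset, w A * f A ≤ (∑ A ∈ S.powerset, w A) * bernoulliExpect q S f := by
  induction S using Finset.induction generalizing f w with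
  | empty => simp [bernoulliExpect]
  | @insert i S hi ih =>
    have h0 := ih hf fun j hj A hA hjA =>
      hw j (mem_insert_of_mem hj) A (hA.trans (subset_insert i S)) hjA
    have h1 := ih (f := fun A => f (insert i A)) (w := fun A => w (insert i A))
      (fun A B hAB => hf (insert_subset_insert i hAB)) fun j hj A hA hjA => by
        rw [insert_comm]
        refine hw j (mem_insert_of_mem hj) _ (insert_subset_insert i hA) ?_
        exact mem_insert.not.2 (not_or.2 ⟨fun h => hi (h ▸ hj), hjA⟩)
    have hW : (1 - q) * ∑ A ∈ S.powerset, w (insert i A) ≤ q * ∑ A ∈ S.powerset, w A := by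
      rw [mul_sum, mul_sum]
      refine sum_le_sum fun A hA => hw i (mem_insert_self i S) A ?_ fun h => hi ?_
      · exact (mem_powerset.1 hA).trans (subset_insert i S)
      · exact mem_powerset.1 hA h
    have hB : bernoulliExpect q S f ≤ bernoulliExpect q S (fun A => f (insert i A)) :=
      bernoulliExpect_mono hq0 hq1 S fun A => hf (subset_insert i A)
    rw [sum_powerset_insert hi, sum_powerset_insert hi, bernoulliExpect_insert hi]
    nlinarith [mul_nonneg (sub_nonneg.2 hB) (sub_nonneg.2 hW)]

lemma bernoulliExpect_univ [Fintype V] (q : ℝ) (f : Finset V → ℝ) :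
    bernoulliExpect q univ f = ∑ Y, bernoulliSiteWeight q Y * f Y := by
  simp only [bernoulliExpect, powerset_univ, card_univ, bernoulliSiteWeight]

section Comparison

variable [Fintype V] [DecidableEq V] {q : ℝ} {f w : Finset V → ℝ}

lemma bernoulliSiteWeight_compl (q : ℝ) (Y : Finset V) :
    bernoulliSiteWeight (1 - q) Yᶜ = bernoulliSiteWeight q Y := by
  rw [bernoulliSiteWeight, bernoulliSiteWeight, card_compl,
    Nat.sub_sub_self (card_le_univ Y), sub_sub_cancel, mul_comm]

lemma sum_comp_compl {M : Type*} [AddCommMonoid M] (g : Finset V → M) :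
    ∑ Y, g Yᶜ = ∑ Y, g Y :=
  Equiv.sum_comp (compl_involutive.toPerm _) g

theorem sum_mul_le_sum_mul_bernoulli (hq0 : 0 ≤ q) (hq1 : q ≤ 1) (hf : Monotone f)
    (hw : ∀ i A, i ∉ A → (1 - q) * w (insert i A) ≤ q * w A) :
    ∑ Y, w Y * f Y ≤ (∑ Y, w Y) * ∑ Y, bernoulliSiteWeight q Y * f Y := by
  simpa only [← bernoulliExpect_univ, powerset_univ] using
    sum_mul_le_sum_mul_bernoulliExpect hq0 hq1 univ hf fun i _ A _ hi => hw i A hi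

-- Complementation reverses inclusion and swaps `q` with `1 - q`.
theorem sum_mul_bernoulli_le_sum_mul (hq0 : 0 ≤ q) (hq1 : q ≤ 1) (hf : Monotone f)
    (hw : ∀ i A, i ∉ A → q * w A ≤ (1 - q) * w (insert i A)) :
    (∑ Y, w Y) * ∑ Y, bernoulliSiteWeight q Y * f Y ≤ ∑ Y, w Y * f Y := by
  have h := sum_mul_le_sum_mul_bernoulli (q := 1 - q) (by linarith) (by linarith)
    (f := fun Y => -f Yᶜ) (fun A B hAB => neg_le_neg (hf (compl_le_compl hAB)))
    (w := fun Y => w Yᶜ) fun i A hi => by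
      have hiA : i ∈ Aᶜ := mem_compl.2 hi
      rw [sub_sub_cancel, ← insert_erase hiA, compl_insert]
      exact hw i _ (notMem_erase i _)
  rw [← sum_comp_compl fun Y => bernoulliSiteWeight (1 - q) Y * -f Yᶜ, sum_comp_compl w,
    sum_comp_compl fun Y => w Y * -f Y] at h
  simpa only [compl_compl, bernoulliSiteWeight_compl, mul_neg, sum_neg_distrib,
    neg_le_neg_iff] using h

theorem div_le_sum_bernoulli_of_cond_le (hq0 : 0 ≤ q) (hq1 : q ≤ 1) (hw : ∀ Y, 0 < w Y)
    (hcond : ∀ i A, i ∉ A → w (insert i A) / (w (insert i A) + w A) ≤ q) (hf : Monotone f) :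
    (∑ Y, w Y * f Y) / ∑ Y, w Y ≤ ∑ Y, bernoulliSiteWeight q Y * f Y := by
  rw [div_le_iff₀' (sum_pos (fun Y _ => hw Y) univ_nonempty)]
  refine sum_mul_le_sum_mul_bernoulli hq0 hq1 hf fun i A hi => ?_
  have h := hcond i A hi
  rw [div_le_iff₀ (add_pos (hw _) (hw _))] at h
  linarith

theorem sum_bernoulli_le_div_of_le_cond (hq0 : 0 ≤ q) (hq1 : q ≤ 1) (hw : ∀ Y, 0 < w Y)
    (hcond : ∀ i A, i ∉ A → q ≤ w (insert i A) / (w (insert i A) + w A)) (hf : Monotone f) :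
    ∑ Y, bernoulliSiteWeight q Y * f Y ≤ (∑ Y, w Y * f Y) / ∑ Y, w Y := by
  rw [le_div_iff₀' (sum_pos (fun Y _ => hw Y) univ_nonempty)]
  refine sum_mul_bernoulli_le_sum_mul hq0 hq1 hf fun i A hi => ?_
  have h := hcond i A hi
  rw [le_div_iff₀ (add_pos (hw _) (hw _))] at h
  linarith

end Comparison

section SiteRandomCluster

variable [Fintype V] (G : SimpleGraph V) {p : ℝ}

lemma siteWeight_pos (hp0 : 0 < p) (hp1 : p < 1) (Y : Finset V) : 0 < siteWeight G p Y := by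
  have := sub_pos.2 hp1
  unfold siteWeight
  positivity

variable [DecidableEq V]

lemma two_mul_siteWeight {i : V} {A : Finset V} (hi : i ∉ A) :
    2 * p * siteWeight G p A =
      (1 - p) * 2 ^ kappa G i (insert i A) * siteWeight G p (insert i A) := by
  have hk := numClusters_add_kappa G (mem_insert_self i A)
  rw [erase_insert hi] at hk
  have h2 : (2 : ℝ) * 2 ^ numClusters G A =
      2 ^ numClusters G (insert i A) * 2 ^ kappa G i (insert i A) := by
    rw [← pow_succ', ← pow_add, hk]
  have hn : Fintype.card V - #A = Fintype.card V - (#A + 1) + 1 := by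
    have := card_lt_univ_of_notMem hi
    omega
  unfold siteWeight
  rw [card_insert_of_notMem hi, hn, pow_succ, pow_succ]
  linear_combination (p ^ #A * p * (1 - p) ^ (Fintype.card V - (#A + 1)) * (1 - p)) * h2

theorem siteWeight_conditional (hp0 : 0 < p) (hp1 : p < 1) (i : V) (Y : Finset V) :
    siteWeight G p (insert i (Y.erase i)) /
        (siteWeight G p (insert i (Y.erase i)) + siteWeight G p (Y.erase i)) =
      p / (p + (1 - p) * (2 : ℝ) ^ ((kappa G i Y : ℤ) - 1)) := by
  have h := two_mul_siteWeight G (p := p) (notMem_erase i Y)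
  rw [kappa_insert_erase] at h
  have hW1 := siteWeight_pos G hp0 hp1 (insert i (Y.erase i))
  have hW0 := siteWeight_pos G hp0 hp1 (Y.erase i)
  have hc : 0 < (1 - p) * (2 : ℝ) ^ ((kappa G i Y : ℤ) - 1) :=
    mul_pos (sub_pos.2 hp1) (zpow_pos two_pos _)
  rw [zpow_sub_one₀ two_ne_zero, zpow_natCast] at hc ⊢
  rw [div_eq_div_iff (by linarith) (by linarith)]
  linear_combination -h / 2

theorem sum_bernoulli_le_siteRC [DecidableRel G.Adj] {Δ : ℕ} (hΔ : ∀ v, G.degree v ≤ Δ)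
    (hp0 : 0 < p) (hp1 : p < 1) {f : Finset V → ℝ} (hf : Monotone f) :
    ∑ Y, bernoulliSiteWeight (p / (p + (1 - p) * (2 : ℝ) ^ ((Δ : ℤ) - 1))) Y * f Y ≤
      (∑ Y, siteWeight G p Y * f Y) / ∑ Y, siteWeight G p Y := by
  have hc (n : ℤ) : 0 < (1 - p) * (2 : ℝ) ^ n := mul_pos (sub_pos.2 hp1) (zpow_pos two_pos n)
  refine sum_bernoulli_le_div_of_le_cond (div_nonneg hp0.le (add_pos hp0 (hc _)).le)
    (div_le_one_of_le₀ (by linarith [hc ((Δ : ℤ) - 1)]) (add_pos hp0 (hc _)).le)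
    (siteWeight_pos G hp0 hp1) (fun i A hi => ?_) hf
  rw [← erase_eq_of_notMem hi, siteWeight_conditional G hp0 hp1]
  have hκ : kappa G i A ≤ Δ := (kappa_le_degree G).trans (hΔ i)
  refine div_le_div_of_nonneg_left hp0.le (add_pos hp0 (hc _)) ?_
  gcongr
  exact one_le_two

theorem siteRC_le_sum_bernoulli (hp0 : 0 < p) (hp1 : p < 1) {f : Finset V → ℝ}
    (hf : Monotone f) :
    (∑ Y, siteWeight G p Y * f Y) / ∑ Y, siteWeight G p Y ≤
      ∑ Y, bernoulliSiteWeight (p / (p + (1 - p) / 2)) Y * f Y := by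
  have hc : 0 < (1 - p) / 2 := by linarith
  refine div_le_sum_bernoulli_of_cond_le (div_nonneg hp0.le (add_pos hp0 hc).le)
    (div_le_one_of_le₀ (by linarith) (add_pos hp0 hc).le)
    (siteWeight_pos G hp0 hp1) (fun i A hi => ?_) hf
  rw [← erase_eq_of_notMem hi, siteWeight_conditional G hp0 hp1]
  refine div_le_div_of_nonneg_left hp0.le (add_pos hp0 hc) ?_
  have h2 : (1 : ℝ) ≤ 2 ^ kappa G i A := one_le_pow₀ one_le_two
  rw [zpow_sub_one₀ two_ne_zero, zpow_natCast]
  nlinarith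

end SiteRandomCluster

variable [Fintype V] [DecidableEq V]

/-- **Single-site conditionals and stochastic comparison for the site random-cluster
measure.** On a finite graph of maximal degree `Δ`, the conditional probability that
`i ∈ Y` given `Y ∖ {i}` equals `p / (p + (1-p)·2^{κ(i,Y)-1})`; consequently the site
random-cluster measure is stochastically dominated by Bernoulli site percolation with
parameter `p* = p/(p + (1-p)/2)` and stochastically dominates Bernoulli site
percolation with parameter `p_* = p/(p + (1-p)·2^{Δ-1})`. -/
theorem site_rc_conditionals_and_comparison
    (G : SimpleGraph V) [DecidableRel G.Adj] (Δ : ℕ) (hΔ : ∀ v : V, G.degree v ≤ Δ)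
    (p : ℝ) (hp0 : 0 < p) (hp1 : p < 1) :
    (∀ (i : V) (Y : Finset V),
      siteWeight G p (insert i (Y.erase i)) /
          (siteWeight G p (insert i (Y.erase i)) + siteWeight G p (Y.erase i)) =
        p / (p + (1 - p) * (2 : ℝ) ^ ((kappa G i Y : ℤ) - 1))) ∧
    (∀ f : Finset V → ℝ, Monotone f →
      ((∑ Y : Finset V, bernoulliSiteWeight (p / (p + (1 - p) * (2 : ℝ) ^ ((Δ : ℤ) - 1))) Y * f Y ≤
          (∑ Y : Finset V, siteWeight G p Y * f Y) / (∑ Y : Finset V, siteWeight G p Y)) ∧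
        (∑ Y : Finset V, siteWeight G p Y * f Y) / (∑ Y : Finset V, siteWeight G p Y) ≤
          ∑ Y : Finset V, bernoulliSiteWeight (p / (p + (1 - p) / 2)) Y * f Y)) := by
  exact ⟨siteWeight_conditional G hp0 hp1, fun f hf =>
    ⟨sum_bernoulli_le_siteRC G hΔ hp0 hp1 hf, siteRC_le_sum_bernoulli G hp0 hp1 hf⟩⟩

end SiteRC
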